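/- arXiv:1204.1003 — 8 statements merged into one kernel-verified Lean document; each statement's English description precedes it below -/
import Mathlib

section
/- For any point M inside triangle ABC with side lengths a=|BC|, b=|CA|, c=|AB|, if R_A denotes the distance from M to vertex A and r_b, r_c denote the distances from M to sides CA and AB respectively, then a·R_A ≥ c·r_b + b·r_c. -/
/-!
Place the vectors `x = A - M`, `u = C - A`, `w = B - A` in the complex plane. Then
`r_b · b ≤ |Im (conj u · x)|` and `r_c · c ≤ |Im (conj x · w)|`, and since `M` lies in the triangle
these two signed areas have the same sign. Hence `c² r_b b + b² r_c c` is at most the absolute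
value of `|w|² Im (conj u · x) - |u|² Im (conj w · x) = Im (conj u · x · conj w · (w - u))`,
which is at most `|u| |x| |w| |w - u| = b R_A c a`. Dividing by `b c` gives the inequality.
-/

open Metric Module
open scoped RealInnerProductSpace

theorem exists_eq_smul_add_smul_add_smul_of_mem_convexHull_triple {E : Type*} [AddCommGroup E]
    [Module ℝ E] {A B C M : E} (hM : M ∈ convexHull ℝ {A, B, C}) :
    ∃ α β γ : ℝ, 0 ≤ α ∧ 0 ≤ β ∧ 0 ≤ γ ∧ α + β + γ = 1 ∧ α • A + β • B + γ • C = M := by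
  rw [convexHull_insert (Set.insert_nonempty B {C}), convexHull_pair,
    convexJoin_singleton_left, Set.mem_iUnion₂] at hM
  obtain ⟨_, ⟨β, γ, hβ, hγ, hβγ, rfl⟩, α, t, hα, ht, hαt, rfl⟩ := hM
  refine ⟨α, t * β, t * γ, hα, by positivity, by positivity,
    by linear_combination hαt + t * hβγ, by module⟩

theorem mul_abs_add_mul_abs_eq_abs {R : Type*} [Ring R] [LinearOrder R] [IsStrictOrderedRing R]
    {p q s t : R} (hp : 0 ≤ p) (hq : 0 ≤ q) (hst : 0 ≤ s * t) :
    p * |s| + q * |t| = |p * s + q * t| := by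
  rcases mul_nonneg_iff.mp hst with ⟨hs, ht⟩ | ⟨hs, ht⟩
  · rw [abs_of_nonneg hs, abs_of_nonneg ht, abs_of_nonneg (by positivity)]
  · rw [abs_of_nonpos hs, abs_of_nonpos ht,
      abs_of_nonpos (add_nonpos (mul_nonpos_of_nonneg_of_nonpos hp hs)
        (mul_nonpos_of_nonneg_of_nonpos hq ht))]
    noncomm_ring

namespace Orientation

variable {V : Type*} [NormedAddCommGroup V] [InnerProductSpace ℝ V] [Fact (finrank ℝ V = 2)]
  (o : Orientation ℝ V (Fin 2))

local notation "ω" => o.areaForm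

theorem abs_areaForm_add_areaForm_le (A B C M : V) :
    |‖B - A‖ ^ 2 * ω (C - M) (A - M) + ‖C - A‖ ^ 2 * ω (A - M) (B - M)| ≤
      ‖B - C‖ * ‖A - M‖ * ‖C - A‖ * ‖B - A‖ := by
  have hk : ∀ x y : V, o.kahler x y = ⟨⟪x, y⟫, ω x y⟩ := fun x y => by
    simp [kahler_apply_apply, Complex.ext_iff]
  rw [show C - M = (C - A) + (A - M) by abel, show B - M = (B - A) + (A - M) by abel,
    show B - C = (B - A) - (C - A) by abel]
  generalize A - M = x, C - A = u, B - A = w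
  have key : ‖w‖ ^ 2 * ω (u + x) x + ‖u‖ ^ 2 * ω x (w + x) =
      (o.kahler u x * o.kahler w (w - u)).im := by
    rw [hk, hk, Complex.mul_im, inner_sub_right, real_inner_self_eq_norm_sq, real_inner_comm u w,
      map_sub, map_add, map_add, LinearMap.add_apply, areaForm_apply_self, areaForm_apply_self,
      o.areaForm_swap w u]
    linear_combination -o.inner_mul_areaForm_sub u x w
  calc _ ≤ ‖o.kahler u x * o.kahler w (w - u)‖ := key ▸ Complex.abs_im_le_norm _
    _ = ‖w - u‖ * ‖x‖ * ‖u‖ * ‖w‖ := by rw [norm_mul, norm_kahler, norm_kahler]; ring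

theorem infDist_affineSpan_pair_mul_norm_le (M P Q : V) :
    infDist M (affineSpan ℝ {P, Q} : Set V) * ‖Q - P‖ ≤ |ω (P - M) (Q - M)| := by
  rcases eq_or_ne P Q with rfl | hPQ
  · simp
  set d := Q - P
  have hd : ‖d‖ ≠ 0 := by simp [d, sub_eq_zero, hPQ.symm]
  set F := AffineMap.lineMap P Q (⟪M - P, d⟫ / ‖d‖ ^ 2)
  have hF : M - F = (M - P) - (⟪M - P, d⟫ / ‖d‖ ^ 2) • d := by
    simp only [F, AffineMap.lineMap_apply_module', d]; abel
  have horth : ⟪M - F, d⟫ = 0 := by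
    rw [hF, inner_sub_left, real_inner_smul_left, real_inner_self_eq_norm_sq]
    field_simp; ring
  have harea : ω (M - F) d = - ω (P - M) (Q - M) := by
    rw [hF, show Q - M = d - (M - P) by simp [d]]
    simp only [map_sub, map_smul, LinearMap.sub_apply, LinearMap.smul_apply, areaForm_apply_self,
      smul_eq_mul, ← neg_sub M P, map_neg, LinearMap.neg_apply]
    rw [o.areaForm_swap P M]
    ring
  calc infDist M (affineSpan ℝ {P, Q} : Set V) * ‖d‖ ≤ ‖M - F‖ * ‖d‖ := by
        gcongr
        rw [← dist_eq_norm]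
        exact infDist_le_dist_of_mem (AffineMap.lineMap_mem_affineSpan_pair _ P Q)
    _ = |ω (P - M) (Q - M)| := by rw [← o.abs_areaForm_of_orthogonal horth, harea, abs_neg]

theorem areaForm_mul_areaForm_nonneg_of_mem_convexHull {A B C M : V}
    (hM : M ∈ convexHull ℝ {A, B, C}) : 0 ≤ ω (C - M) (A - M) * ω (A - M) (B - M) := by
  obtain ⟨α, β, γ, -, hβ, hγ, hsum, rfl⟩ :=
    exists_eq_smul_add_smul_add_smul_of_mem_convexHull_triple hM
  set M := α • A + β • B + γ • C
  have hA : A - M = -(β • (B - A) + γ • (C - A)) := by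
    linear_combination (norm := module) hsum.symm • A
  have hCA : ω (C - M) (A - M) = β * ω (B - A) (C - A) := by
    rw [show C - M = (C - A) + (A - M) by abel, map_add, LinearMap.add_apply, areaForm_apply_self,
      hA]
    simp only [map_neg, map_add, map_smul, areaForm_apply_self, smul_eq_mul]
    rw [o.areaForm_swap (C - A) (B - A)]
    ring
  have hAB : ω (A - M) (B - M) = γ * ω (B - A) (C - A) := by
    rw [show B - M = (B - A) + (A - M) by abel, map_add, areaForm_apply_self, hA]
    simp only [map_neg, map_add, map_smul, LinearMap.neg_apply, LinearMap.add_apply,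
      LinearMap.smul_apply, areaForm_apply_self, smul_eq_mul]
    rw [o.areaForm_swap (C - A) (B - A)]
    ring
  rw [hCA, hAB]
  calc (0 : ℝ) ≤ β * γ * ω (B - A) (C - A) ^ 2 := by positivity
    _ = _ := by ring

end Orientation

theorem dist_mul_infDist_add_dist_mul_infDist_le {V : Type*} [NormedAddCommGroup V]
    [InnerProductSpace ℝ V] [Fact (finrank ℝ V = 2)] {A B C M : V}
    (hM : M ∈ convexHull ℝ {A, B, C}) (hAB : A ≠ B) (hCA : C ≠ A) :
    dist A B * infDist M (affineSpan ℝ {C, A} : Set V) +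
      dist C A * infDist M (affineSpan ℝ {A, B} : Set V) ≤ dist B C * dist M A := by
  have : FiniteDimensional ℝ V := .of_fact_finrank_eq_two
  let o : Orientation ℝ V (Fin 2) := (finBasisOfFinrankEq ℝ V Fact.out).orientation
  set rb := infDist M (affineSpan ℝ {C, A} : Set V)
  set rc := infDist M (affineSpan ℝ {A, B} : Set V)
  have hb : rb * ‖C - A‖ ≤ |o.areaForm (C - M) (A - M)| := by
    rw [norm_sub_rev]; exact o.infDist_affineSpan_pair_mul_norm_le M C A
  have hc : rc * ‖B - A‖ ≤ |o.areaForm (A - M) (B - M)| :=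
    o.infDist_affineSpan_pair_mul_norm_le M A B
  have hbc : ‖B - A‖ ^ 2 * |o.areaForm (C - M) (A - M)| +
      ‖C - A‖ ^ 2 * |o.areaForm (A - M) (B - M)| ≤ ‖B - C‖ * ‖A - M‖ * ‖C - A‖ * ‖B - A‖ := by
    rw [mul_abs_add_mul_abs_eq_abs (by positivity) (by positivity)
      (o.areaForm_mul_areaForm_nonneg_of_mem_convexHull hM)]
    exact o.abs_areaForm_add_areaForm_le A B C M
  have hb0 : 0 < ‖C - A‖ := norm_pos_iff.mpr (sub_ne_zero.mpr hCA)
  have hc0 : 0 < ‖B - A‖ := norm_pos_iff.mpr (sub_ne_zero.mpr hAB.symm)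
  rw [dist_comm A B, dist_comm M A, dist_eq_norm, dist_eq_norm, dist_eq_norm, dist_eq_norm]
  refine le_of_mul_le_mul_right ?_ (mul_pos hb0 hc0)
  calc (‖B - A‖ * rb + ‖C - A‖ * rc) * (‖C - A‖ * ‖B - A‖)
      = ‖B - A‖ ^ 2 * (rb * ‖C - A‖) + ‖C - A‖ ^ 2 * (rc * ‖B - A‖) := by ring
    _ ≤ ‖B - A‖ ^ 2 * |o.areaForm (C - M) (A - M)| +
          ‖C - A‖ ^ 2 * |o.areaForm (A - M) (B - M)| := by gcongr
    _ ≤ ‖B - C‖ * ‖A - M‖ * (‖C - A‖ * ‖B - A‖) := by rw [← mul_assoc]; exact hbc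

theorem stmt_0 (A B C M : EuclideanSpace ℝ (Fin 2))
    (hABC : AffineIndependent ℝ ![A, B, C])
    (hM : M ∈ interior (convexHull ℝ {A, B, C})) :
    dist B C * dist M A ≥
      dist A B * infDist M (affineSpan ℝ {C, A} : Set (EuclideanSpace ℝ (Fin 2))) +
      dist C A * infDist M (affineSpan ℝ {A, B} : Set (EuclideanSpace ℝ (Fin 2))) := by
  have : Fact (finrank ℝ (EuclideanSpace ℝ (Fin 2)) = 2) := ⟨finrank_euclideanSpace_fin⟩
  exact dist_mul_infDist_add_dist_mul_infDist_le (interior_subset hM)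
    (by simpa using hABC.injective.ne (show (0 : Fin 3) ≠ 1 by decide))
    (by simpa using hABC.injective.ne (show (2 : Fin 3) ≠ 0 by decide))
end

section
/- For any point M inside triangle ABC, R_A + R_B + R_C ≥ 2(r_a + r_b + r_c) (the Erdős–Mordell inequality). -/
/-!
Write `M = α A + β B + γ C` in barycentric coordinates and let `D = ω(B - A, C - A)`, twice the
signed area of the triangle, with sides `a = BC`, `b = CA`, `c = AB`. The distances to the sides
are at most `α|D|/a`, `β|D|/b`, `γ|D|/c`. The vector `v = c²(C - A) - b²(B - A)` is `b²c²` times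
the difference of the images of `C` and `B` under the unit inversion at `A`, so `‖v‖ = abc`;
and `ω(M - A, v) = (βc² + γb²) D`, so `|ω(M - A, v)| ≤ R_A ‖v‖` gives
`(βc² + γb²)|D| ≤ abc R_A`. Adding the three cyclic versions, each of `α|D|`, `β|D|`, `γ|D|`
gets a coefficient like `b² + c² ≥ 2bc`, which yields the inequality.
-/

open Metric
open scoped EuclideanSpace

theorem norm_sq_smul_sub_norm_sq_smul {V : Type*} [NormedAddCommGroup V] [InnerProductSpace ℝ V]
    (x y : V) : ‖‖x‖ ^ 2 • y - ‖y‖ ^ 2 • x‖ = ‖x‖ * ‖y‖ * ‖x - y‖ := by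
  refine (sq_eq_sq₀ (norm_nonneg _) (by positivity)).mp ?_
  simp only [norm_sub_sq_real, norm_smul, real_inner_smul_left, real_inner_smul_right,
    Real.norm_eq_abs, abs_pow, abs_norm, real_inner_comm x y, mul_pow]
  ring

theorem exists_weights_of_mem_convexHull_triple {V : Type*} [AddCommGroup V] [Module ℝ V]
    {A B C M : V} (h : M ∈ convexHull ℝ {A, B, C}) :
    ∃ α β γ : ℝ, 0 ≤ α ∧ 0 ≤ β ∧ 0 ≤ γ ∧ α + β + γ = 1 ∧ α • A + β • B + γ • C = M := by
  rw [convexHull_insert (Set.insert_nonempty _ _), convexHull_pair, mem_convexJoin] at h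
  obtain ⟨_, rfl, P, ⟨β, γ, hβ, hγ, hβγ, rfl⟩, α, δ, hα, hδ, hαδ, rfl⟩ := h
  refine ⟨α, δ * β, δ * γ, hα, by positivity, by positivity,
    by linear_combination δ * hβγ + hαδ, ?_⟩
  simp only [smul_add, smul_smul, add_assoc]

theorem sub_eq_smul_sub_add_smul_sub {V : Type*} [AddCommGroup V] [Module ℝ V] {A B C M : V}
    {α β γ : ℝ} (hsum : α + β + γ = 1) (hM : α • A + β • B + γ • C = M) :
    M - A = β • (B - A) + γ • (C - A) := by
  rw [← hM, show α = 1 - β - γ by linarith]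
  module

theorem two_mul_add_add_le_of_mul_le {a b c RA RB RC ra rb rc α β γ D : ℝ}
    (ha : 0 < a) (hb : 0 < b) (hc : 0 < c) (hα : 0 ≤ α) (hβ : 0 ≤ β) (hγ : 0 ≤ γ) (hD : 0 ≤ D)
    (hRA : (β * c ^ 2 + γ * b ^ 2) * D ≤ c * b * a * RA)
    (hRB : (γ * a ^ 2 + α * c ^ 2) * D ≤ a * c * b * RB)
    (hRC : (α * b ^ 2 + β * a ^ 2) * D ≤ b * a * c * RC)
    (hra : ra * a ≤ α * D) (hrb : rb * b ≤ β * D) (hrc : rc * c ≤ γ * D) :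
    2 * (ra + rb + rc) ≤ RA + RB + RC := by
  refine le_of_mul_le_mul_left ?_ (by positivity : 0 < a * b * c)
  nlinarith [mul_nonneg (mul_nonneg hα hD) (sq_nonneg (b - c)),
    mul_nonneg (mul_nonneg hβ hD) (sq_nonneg (c - a)),
    mul_nonneg (mul_nonneg hγ hD) (sq_nonneg (a - b)),
    mul_le_mul_of_nonneg_left hra (by positivity : (0 : ℝ) ≤ b * c),
    mul_le_mul_of_nonneg_left hrb (by positivity : (0 : ℝ) ≤ c * a),
    mul_le_mul_of_nonneg_left hrc (by positivity : (0 : ℝ) ≤ a * b)]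

namespace Orientation

variable {V : Type*} [NormedAddCommGroup V] [InnerProductSpace ℝ V]
  [Fact (Module.finrank ℝ V = 2)] (o : Orientation ℝ V (Fin 2))

local notation "ω" => o.areaForm

theorem infDist_affineSpan_pair_mul_dist_le (M P Q : V) :
    infDist M (affineSpan ℝ {P, Q} : Set V) * dist P Q ≤ |ω (M - P) (Q - P)| := by
  rcases eq_or_ne P Q with rfl | hPQ
  · simp
  set u := M - P
  set v := Q - P
  have hv : ‖v‖ ≠ 0 := norm_ne_zero_iff.mpr (sub_ne_zero.mpr hPQ.symm)
  set t := inner ℝ u v / ‖v‖ ^ 2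
  have hfoot : AffineMap.lineMap P Q t ∈ (affineSpan ℝ {P, Q} : Set V) :=
    AffineMap.lineMap_mem_affineSpan_pair t P Q
  have hdist : dist M (AffineMap.lineMap P Q t) = ‖u - t • v‖ := by
    rw [dist_eq_norm, AffineMap.lineMap_apply, vsub_eq_sub, vadd_eq_add]
    show _ = ‖M - P - t • (Q - P)‖
    congr 1
    abel
  have hsq : (‖u - t • v‖ * ‖v‖) ^ 2 = ω u v ^ 2 := by
    rw [mul_pow, norm_sub_sq_real, norm_smul, inner_smul_right, Real.norm_eq_abs, mul_pow, sq_abs]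
    simp only [t]
    field_simp
    linear_combination -o.inner_sq_add_areaForm_sq u v
  calc infDist M (affineSpan ℝ {P, Q} : Set V) * dist P Q ≤ ‖u - t • v‖ * ‖v‖ := by
        rw [dist_comm, dist_eq_norm, ← hdist]
        gcongr
        exact infDist_le_dist_of_mem hfoot
    _ ≤ |ω u v| := (le_abs_self _).trans (sq_le_sq.mp hsq.le)

theorem areaForm_sub_sub_rotate (A B C : V) : ω (C - B) (A - B) = ω (B - A) (C - A) := by
  rw [show C - B = (C - A) - (B - A) by abel, show A - B = -(B - A) by abel]
  generalize B - A = x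
  generalize C - A = y
  simp only [map_sub, map_neg, LinearMap.sub_apply, o.areaForm_apply_self, o.areaForm_swap y x]
  ring

theorem mul_abs_areaForm_le_norm_mul_norm_mul (x y : V) {β γ : ℝ} (hβ : 0 ≤ β) (hγ : 0 ≤ γ) :
    (β * ‖x‖ ^ 2 + γ * ‖y‖ ^ 2) * |ω x y| ≤ ‖x‖ * ‖y‖ * ‖x - y‖ * ‖β • x + γ • y‖ := by
  have key :
      ω (β • x + γ • y) (‖x‖ ^ 2 • y - ‖y‖ ^ 2 • x) = (β * ‖x‖ ^ 2 + γ * ‖y‖ ^ 2) * ω x y := by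
    simp only [map_add, map_sub, map_smul, LinearMap.add_apply,
      LinearMap.smul_apply, o.areaForm_apply_self, smul_eq_mul, o.areaForm_swap y x]
    ring
  calc (β * ‖x‖ ^ 2 + γ * ‖y‖ ^ 2) * |ω x y|
      = |ω (β • x + γ • y) (‖x‖ ^ 2 • y - ‖y‖ ^ 2 • x)| := by
        rw [key, abs_mul, abs_of_nonneg (add_nonneg (mul_nonneg hβ (sq_nonneg _))
          (mul_nonneg hγ (sq_nonneg _)))]
    _ ≤ ‖β • x + γ • y‖ * ‖‖x‖ ^ 2 • y - ‖y‖ ^ 2 • x‖ := o.abs_areaForm_le _ _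
    _ = ‖x‖ * ‖y‖ * ‖x - y‖ * ‖β • x + γ • y‖ := by
        rw [norm_sq_smul_sub_norm_sq_smul]
        ring

variable {A B C M : V} {α β γ : ℝ}

theorem weighted_dist_sq_mul_abs_areaForm_le (hβ : 0 ≤ β) (hγ : 0 ≤ γ) (hsum : α + β + γ = 1)
    (hM : α • A + β • B + γ • C = M) :
    (β * dist A B ^ 2 + γ * dist C A ^ 2) * |ω (B - A) (C - A)| ≤
      dist A B * dist C A * dist B C * dist M A := by
  have h := o.mul_abs_areaForm_le_norm_mul_norm_mul (B - A) (C - A) hβ hγ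
  rwa [sub_sub_sub_cancel_right, ← sub_eq_smul_sub_add_smul_sub hsum hM, ← dist_eq_norm',
    ← dist_eq_norm, ← dist_eq_norm, ← dist_eq_norm] at h

theorem infDist_affineSpan_pair_mul_dist_le_of_barycentric (hγ : 0 ≤ γ) (hsum : α + β + γ = 1)
    (hM : α • A + β • B + γ • C = M) :
    infDist M (affineSpan ℝ {A, B} : Set V) * dist A B ≤ γ * |ω (B - A) (C - A)| := by
  refine (o.infDist_affineSpan_pair_mul_dist_le M A B).trans_eq ?_
  rw [sub_eq_smul_sub_add_smul_sub hsum hM]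
  simp only [map_add, map_smul, LinearMap.add_apply, LinearMap.smul_apply, o.areaForm_apply_self,
    smul_eq_mul, o.areaForm_swap (C - A)]
  rw [mul_zero, zero_add, mul_neg, abs_neg, abs_mul, abs_of_nonneg hγ]

end Orientation

theorem stmt_2 (A B C M : EuclideanSpace ℝ (Fin 2))
    (hABC : AffineIndependent ℝ ![A, B, C])
    (hM : M ∈ interior (convexHull ℝ {A, B, C})) :
    dist M A + dist M B + dist M C ≥
      2 * (infDist M (affineSpan ℝ {B, C} : Set (EuclideanSpace ℝ (Fin 2))) +
           infDist M (affineSpan ℝ {C, A} : Set (EuclideanSpace ℝ (Fin 2))) +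
           infDist M (affineSpan ℝ {A, B} : Set (EuclideanSpace ℝ (Fin 2)))) := by
  obtain ⟨α, β, γ, hα, hβ, hγ, hsum, hMA⟩ :=
    exists_weights_of_mem_convexHull_triple (interior_subset hM)
  have hMB : β • B + γ • C + α • A = M := by rw [← hMA]; abel
  have hMC : γ • C + α • A + β • B = M := by rw [← hMA]; abel
  have hAB : A ≠ B := by simpa using hABC.injective.ne (by decide : (0 : Fin 3) ≠ 1)
  have hBC : B ≠ C := by simpa using hABC.injective.ne (by decide : (1 : Fin 3) ≠ 2)
  have hCA : C ≠ A := by simpa using hABC.injective.ne (by decide : (2 : Fin 3) ≠ 0)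
  let o : Orientation ℝ (EuclideanSpace ℝ (Fin 2)) (Fin 2) :=
    (EuclideanSpace.basisFun (Fin 2) ℝ).toBasis.orientation
  have hrotB := o.areaForm_sub_sub_rotate A B C
  have hrotC := o.areaForm_sub_sub_rotate B C A
  rw [hrotB] at hrotC
  exact two_mul_add_add_le_of_mul_le (dist_pos.2 hBC) (dist_pos.2 hCA) (dist_pos.2 hAB) hα hβ hγ
    (abs_nonneg _) (o.weighted_dist_sq_mul_abs_areaForm_le hβ hγ hsum hMA)
    (hrotB ▸ o.weighted_dist_sq_mul_abs_areaForm_le hγ hα (by linarith) hMB)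
    (hrotC ▸ o.weighted_dist_sq_mul_abs_areaForm_le hα hβ (by linarith) hMC)
    (hrotB ▸ o.infDist_affineSpan_pair_mul_dist_le_of_barycentric hα (by linarith) hMB)
    (hrotC ▸ o.infDist_affineSpan_pair_mul_dist_le_of_barycentric hβ (by linarith) hMC)
    (o.infDist_affineSpan_pair_mul_dist_le_of_barycentric hγ hsum hMA)
end

section
/- For any point M inside triangle ABC, R_A · R_B · R_C ≥ 8 · r_a · r_b · r_c (inequality of Child). -/
open Metric RealInnerProductSpace

/-!
Write `a, b, c` for the side lengths and `S` for the area. If `M - A = β (B - A) + γ (C - A)`,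
then `r_c c ≤ 2 γ S` and `r_b b ≤ 2 β S`, and Cauchy–Schwarz turns this into
`r_b r_c ≤ R_A² sin² (A / 2) = R_A² (a² - (b - c)²) / (4 b c)`. Multiplying the three vertex
inequalities, Child's inequality reduces to `sin (A / 2) sin (B / 2) sin (C / 2) ≤ 1 / 8`, that is,
to `(b + c - a) (c + a - b) (a + b - c) ≤ a b c`.
-/

theorem exists_smul_add_smul_add_smul_eq_of_mem_convexHull {𝕜 E : Type*} [Field 𝕜]
    [LinearOrder 𝕜] [IsStrictOrderedRing 𝕜] [AddCommGroup E] [Module 𝕜 E] {A B C M : E}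
    (hM : M ∈ convexHull 𝕜 {A, B, C}) :
    ∃ α β γ : 𝕜, 0 ≤ α ∧ 0 ≤ β ∧ 0 ≤ γ ∧ α + β + γ = 1 ∧ α • A + β • B + γ • C = M := by
  rw [← convexJoin_singleton_segment] at hM
  obtain ⟨_, rfl, _, ⟨b, c, hb, hc, hbc, rfl⟩, s, t, hs, ht, hst, rfl⟩ := mem_convexJoin.1 hM
  refine ⟨s, t * b, t * c, hs, mul_nonneg ht hb, mul_nonneg ht hc, ?_, ?_⟩
  · linear_combination hst + t * hbc
  · module

theorem sq_sub_sq_mul_sq_sub_sq_mul_sq_sub_sq_le {a b c : ℝ}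
    (ha : a ≤ b + c) (hb : b ≤ c + a) (hc : c ≤ a + b) :
    (a ^ 2 - (c - b) ^ 2) * (b ^ 2 - (a - c) ^ 2) * (c ^ 2 - (b - a) ^ 2) ≤ (a * b * c) ^ 2 := by
  have hx : 0 ≤ b + c - a := by linarith
  have hy : 0 ≤ c + a - b := by linarith
  have hz : 0 ≤ a + b - c := by linarith
  have schur : (b + c - a) * (c + a - b) * (a + b - c) ≤ a * b * c := by
    nlinarith [mul_nonneg hx hy, mul_nonneg hy hz, mul_nonneg hz hx,
      mul_nonneg (mul_nonneg hx hy) hz, sq_nonneg (a - b), sq_nonneg (b - c), sq_nonneg (c - a)]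
  calc (a ^ 2 - (c - b) ^ 2) * (b ^ 2 - (a - c) ^ 2) * (c ^ 2 - (b - a) ^ 2)
      = ((b + c - a) * (c + a - b) * (a + b - c)) ^ 2 := by ring
    _ ≤ (a * b * c) ^ 2 := pow_le_pow_left₀ (by positivity) schur 2

section

variable {V : Type*} [NormedAddCommGroup V] [InnerProductSpace ℝ V]

theorem infDist_affineSpan_pair_mul_norm_le (A B M y : V) (β γ : ℝ)
    (hM : M - A = β • (B - A) + γ • y) :
    infDist M (affineSpan ℝ {A, B} : Set V) * ‖B - A‖ ≤
      |γ| * √(‖B - A‖ ^ 2 * ‖y‖ ^ 2 - ⟪B - A, y⟫ ^ 2) := by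
  rcases eq_or_ne (B - A) 0 with hu | hu
  · rw [hu, norm_zero, mul_zero]
    positivity
  set u := B - A with hu_def
  set s := ⟪u, y⟫ / ‖u‖ ^ 2 with hs
  have hfoot : M - AffineMap.lineMap A B (β + γ * s) = γ • (y - s • u) := by
    rw [AffineMap.lineMap_apply, vsub_eq_sub, vadd_eq_add, ← hu_def]
    linear_combination (norm := module) hM
  have hheight : (‖y - s • u‖ * ‖u‖) ^ 2 = ‖u‖ ^ 2 * ‖y‖ ^ 2 - ⟪u, y⟫ ^ 2 := by
    have : ‖u‖ ≠ 0 := norm_ne_zero_iff.2 hu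
    rw [mul_pow, norm_sub_sq_real, norm_smul, real_inner_smul_right, real_inner_comm,
      Real.norm_eq_abs, mul_pow, sq_abs, hs]
    field_simp
    ring
  calc infDist M (affineSpan ℝ {A, B} : Set V) * ‖u‖
      ≤ dist M (AffineMap.lineMap A B (β + γ * s)) * ‖u‖ := by
        gcongr
        exact infDist_le_dist_of_mem (AffineMap.lineMap_mem_affineSpan_pair _ _ _)
    _ = |γ| * (‖y - s • u‖ * ‖u‖) := by
        rw [dist_eq_norm, hfoot, norm_smul, Real.norm_eq_abs, mul_assoc]
    _ = |γ| * √(‖u‖ ^ 2 * ‖y‖ ^ 2 - ⟪u, y⟫ ^ 2) := by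
        rw [← hheight, Real.sqrt_sq (by positivity)]

theorem four_mul_infDist_mul_infDist_le (A B C M : V) {β γ : ℝ} (hβ : 0 ≤ β) (hγ : 0 ≤ γ)
    (hM : M - A = β • (B - A) + γ • (C - A)) :
    4 * (infDist M (affineSpan ℝ {C, A} : Set V) * dist C A) *
        (infDist M (affineSpan ℝ {A, B} : Set V) * dist A B) ≤
      dist M A ^ 2 * (dist B C ^ 2 - (dist A B - dist C A) ^ 2) := by
  have hb := infDist_affineSpan_pair_mul_norm_le A C M (B - A) γ β (by rw [hM]; abel)
  have hc := infDist_affineSpan_pair_mul_norm_le A B M (C - A) β γ hM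
  rw [Set.pair_comm C A, dist_eq_norm C A, dist_eq_norm' A B, dist_eq_norm M A, dist_eq_norm B C,
    show B - C = (B - A) - (C - A) by abel]
  set x := B - A
  set y := C - A
  set G := ‖x‖ ^ 2 * ‖y‖ ^ 2 - ⟪x, y⟫ ^ 2
  rw [abs_of_nonneg hβ, real_inner_comm, mul_comm (‖y‖ ^ 2)] at hb
  rw [abs_of_nonneg hγ] at hc
  have hCS : ⟪x, y⟫ ≤ ‖x‖ * ‖y‖ := real_inner_le_norm x y
  have hG : 0 ≤ G := sub_nonneg.2 <| by
    rw [← mul_pow]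
    exact sq_le_sq.2 (by simpa [abs_mul] using abs_real_inner_le_norm x y)
  -- `r_b r_c ≤ R_A² sin²(A/2)`, cleared of denominators
  have hvertex : 2 * β * γ * G ≤ ‖β • x + γ • y‖ ^ 2 * (‖x‖ * ‖y‖ - ⟪x, y⟫) := by
    rw [norm_add_sq_real, norm_smul, norm_smul, real_inner_smul_left, real_inner_smul_right,
      Real.norm_eq_abs, Real.norm_eq_abs, abs_of_nonneg hβ, abs_of_nonneg hγ]
    nlinarith [mul_nonneg (sub_nonneg.2 hCS) (sq_nonneg (β * ‖x‖ - γ * ‖y‖)),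
      mul_nonneg (mul_nonneg hβ hγ) (sub_nonneg.2 hCS)]
  have hlaw : ‖x - y‖ ^ 2 - (‖x‖ - ‖y‖) ^ 2 = 2 * (‖x‖ * ‖y‖ - ⟪x, y⟫) := by
    rw [norm_sub_sq_real]
    ring
  calc 4 * (infDist M (affineSpan ℝ {A, C} : Set V) * ‖y‖) *
        (infDist M (affineSpan ℝ {A, B} : Set V) * ‖x‖)
      ≤ 4 * (β * √G) * (γ * √G) := by
        gcongr
        · exact mul_nonneg infDist_nonneg (norm_nonneg _)
    _ = 2 * (2 * β * γ * (√G * √G)) := by ring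
    _ ≤ 2 * (‖M - A‖ ^ 2 * (‖x‖ * ‖y‖ - ⟪x, y⟫)) := by
        rw [Real.mul_self_sqrt hG, hM]
        gcongr
    _ = ‖M - A‖ ^ 2 * (‖x - y‖ ^ 2 - (‖x‖ - ‖y‖) ^ 2) := by
        rw [hlaw]
        ring

theorem sq_eight_mul_infDist_mul_infDist_mul_infDist_mul_sq_le (A B C M : V)
    (hM : M ∈ convexHull ℝ {A, B, C}) :
    (8 * (infDist M (affineSpan ℝ {B, C} : Set V) * infDist M (affineSpan ℝ {C, A} : Set V) *
        infDist M (affineSpan ℝ {A, B} : Set V))) ^ 2 * (dist B C * dist C A * dist A B) ^ 2 ≤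
      (dist M A * dist M B * dist M C) ^ 2 * (dist B C * dist C A * dist A B) ^ 2 := by
  obtain ⟨α, β, γ, hα, hβ, hγ, hsum, hbary⟩ :=
    exists_smul_add_smul_add_smul_eq_of_mem_convexHull hM
  have hA := four_mul_infDist_mul_infDist_le A B C M hβ hγ <| by
    rw [← hbary, show α = 1 - β - γ by linarith]; module
  have hB := four_mul_infDist_mul_infDist_le B C A M hγ hα <| by
    rw [← hbary, show β = 1 - γ - α by linarith]; module
  have hC := four_mul_infDist_mul_infDist_le C A B M hα hβ <| by
    rw [← hbary, show γ = 1 - α - β by linarith]; module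
  set ra := infDist M (affineSpan ℝ {B, C} : Set V)
  set rb := infDist M (affineSpan ℝ {C, A} : Set V)
  set rc := infDist M (affineSpan ℝ {A, B} : Set V)
  have hra : 0 ≤ ra := infDist_nonneg
  have hrb : 0 ≤ rb := infDist_nonneg
  have hrc : 0 ≤ rc := infDist_nonneg
  have hA0 : 0 ≤ 4 * (rb * dist C A) * (rc * dist A B) := by positivity
  have hB0 : 0 ≤ 4 * (rc * dist A B) * (ra * dist B C) := by positivity
  have hC0 : 0 ≤ 4 * (ra * dist B C) * (rb * dist C A) := by positivity
  calc (8 * (ra * rb * rc)) ^ 2 * (dist B C * dist C A * dist A B) ^ 2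
      = 4 * (rb * dist C A) * (rc * dist A B) * (4 * (rc * dist A B) * (ra * dist B C)) *
          (4 * (ra * dist B C) * (rb * dist C A)) := by ring
    _ ≤ dist M A ^ 2 * (dist B C ^ 2 - (dist A B - dist C A) ^ 2) *
          (dist M B ^ 2 * (dist C A ^ 2 - (dist B C - dist A B) ^ 2)) *
          (dist M C ^ 2 * (dist A B ^ 2 - (dist C A - dist B C) ^ 2)) :=
        mul_le_mul (mul_le_mul hA hB hB0 (hA0.trans hA)) hC hC0
          (mul_nonneg (hA0.trans hA) (hB0.trans hB))
    _ = (dist M A * dist M B * dist M C) ^ 2 * ((dist B C ^ 2 - (dist A B - dist C A) ^ 2) *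
          (dist C A ^ 2 - (dist B C - dist A B) ^ 2) *
          (dist A B ^ 2 - (dist C A - dist B C) ^ 2)) := by ring
    _ ≤ (dist M A * dist M B * dist M C) ^ 2 * (dist B C * dist C A * dist A B) ^ 2 := by
        gcongr
        exact sq_sub_sq_mul_sq_sub_sq_mul_sq_sub_sq_le (dist_comm C B ▸ dist_triangle C A B)
          (dist_comm A C ▸ dist_triangle A B C) (dist_comm B A ▸ dist_triangle B C A)

theorem eight_mul_infDist_mul_infDist_mul_infDist_le (A B C M : V)
    (hAB : A ≠ B) (hBC : B ≠ C) (hCA : C ≠ A) (hM : M ∈ convexHull ℝ {A, B, C}) :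
    8 * (infDist M (affineSpan ℝ {B, C} : Set V) * infDist M (affineSpan ℝ {C, A} : Set V) *
        infDist M (affineSpan ℝ {A, B} : Set V)) ≤ dist M A * dist M B * dist M C := by
  have hsides : 0 < dist B C * dist C A * dist A B := by
    simp only [mul_pos_iff_of_pos_left, dist_pos, hAB, hBC, hCA, ne_eq, not_false_eq_true]
  have hr : 0 ≤ 8 * (infDist M (affineSpan ℝ {B, C} : Set V) *
      infDist M (affineSpan ℝ {C, A} : Set V) * infDist M (affineSpan ℝ {A, B} : Set V)) :=
    mul_nonneg (by norm_num) (mul_nonneg (mul_nonneg infDist_nonneg infDist_nonneg) infDist_nonneg)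
  rw [← pow_le_pow_iff_left₀ hr (by positivity) two_ne_zero]
  exact le_of_mul_le_mul_right (sq_eight_mul_infDist_mul_infDist_mul_infDist_mul_sq_le A B C M hM)
    (by positivity)

end

theorem stmt_3 (A B C M : EuclideanSpace ℝ (Fin 2))
    (hABC : AffineIndependent ℝ ![A, B, C])
    (hM : M ∈ interior (convexHull ℝ {A, B, C})) :
    dist M A * dist M B * dist M C ≥
      8 * (infDist M (affineSpan ℝ {B, C} : Set (EuclideanSpace ℝ (Fin 2))) *
           infDist M (affineSpan ℝ {C, A} : Set (EuclideanSpace ℝ (Fin 2))) *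
           infDist M (affineSpan ℝ {A, B} : Set (EuclideanSpace ℝ (Fin 2)))) := by
  have hne : ∀ {i j : Fin 3}, i ≠ j → ![A, B, C] i ≠ ![A, B, C] j := hABC.injective.ne
  exact eight_mul_infDist_mul_infDist_mul_infDist_le A B C M
    (by simpa using hne (show (0 : Fin 3) ≠ 1 by decide))
    (by simpa using hne (show (1 : Fin 3) ≠ 2 by decide))
    (by simpa using hne (show (2 : Fin 3) ≠ 0 by decide)) (interior_subset hM)
end

section
/- Let p < q and r ≠ 0 be real numbers. For all real k with pk + r ≥ 0 and -qk - r ≥ 0, or with pk + r ≤ 0 and -qk - r ≤ 0, the inequality (q-p)·√(r²+p²)·√(r²+q²)·√(1+k²) ≥ (r²+p²)·|−qk−r| + (r²+q²)·|pk+r| holds. -/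
/-!
With `A = r² + p²`, `B = r² + q²`, `u = -qk - r`, `v = pk + r`, the sign condition turns the
right-hand side into `|A u + B v|`, and
`A u + B v = (q - p) ((pq - r²) k + r (p + q))`,  `A B = (pq - r²)² + (r (p + q))²`.
The inequality is therefore Cauchy–Schwarz for the vectors `(pq - r², r (p + q))` and `(k, 1)`.
-/

theorem abs_mul_add_le_sqrt_mul_sqrt (a b k : ℝ) :
    |a * k + b| ≤ √(a ^ 2 + b ^ 2) * √(1 + k ^ 2) := by
  rw [← Real.sqrt_mul (by positivity)]
  exact Real.abs_le_sqrt (by nlinarith [sq_nonneg (a - b * k)])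

theorem mul_abs_add_mul_abs_eq_abs_s5 {a b x y : ℝ} (ha : 0 ≤ a) (hb : 0 ≤ b)
    (h : (0 ≤ x ∧ 0 ≤ y) ∨ (x ≤ 0 ∧ y ≤ 0)) :
    a * |x| + b * |y| = |a * x + b * y| := by
  calc a * |x| + b * |y| = |a * x| + |b * y| := by
        rw [abs_mul, abs_mul, abs_of_nonneg ha, abs_of_nonneg hb]
    _ = |a * x + b * y| := by
        refine ((abs_add_eq_add_abs_iff _ _).mpr ?_).symm
        rcases h with ⟨hx, hy⟩ | ⟨hx, hy⟩
        · exact Or.inl ⟨mul_nonneg ha hx, mul_nonneg hb hy⟩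
        · exact Or.inr
            ⟨mul_nonpos_of_nonneg_of_nonpos ha hx, mul_nonpos_of_nonneg_of_nonpos hb hy⟩

theorem stmt_5_general (p q r k : ℝ) (hpq : p < q)
    (hk : (p * k + r ≥ 0 ∧ -(q * k) - r ≥ 0) ∨ (p * k + r ≤ 0 ∧ -(q * k) - r ≤ 0)) :
    (q - p) * Real.sqrt (r ^ 2 + p ^ 2) * Real.sqrt (r ^ 2 + q ^ 2) *
        Real.sqrt (1 + k ^ 2) ≥
      (r ^ 2 + p ^ 2) * |-(q * k) - r| + (r ^ 2 + q ^ 2) * |p * k + r| := by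
  have hsum : (r ^ 2 + p ^ 2) * (-(q * k) - r) + (r ^ 2 + q ^ 2) * (p * k + r)
      = (q - p) * ((p * q - r ^ 2) * k + r * (p + q)) := by ring
  have hprod : (r ^ 2 + p ^ 2) * (r ^ 2 + q ^ 2) = (p * q - r ^ 2) ^ 2 + (r * (p + q)) ^ 2 := by
    ring
  calc (r ^ 2 + p ^ 2) * |-(q * k) - r| + (r ^ 2 + q ^ 2) * |p * k + r|
      = (q - p) * |(p * q - r ^ 2) * k + r * (p + q)| := by
        rw [mul_abs_add_mul_abs_eq_abs_s5 (by positivity) (by positivity)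
          (hk.imp And.symm And.symm), hsum, abs_mul, abs_of_pos (sub_pos.mpr hpq)]
    _ ≤ (q - p) * (√((p * q - r ^ 2) ^ 2 + (r * (p + q)) ^ 2) * √(1 + k ^ 2)) :=
        mul_le_mul_of_nonneg_left (abs_mul_add_le_sqrt_mul_sqrt _ _ _) (sub_pos.mpr hpq).le
    _ = (q - p) * √(r ^ 2 + p ^ 2) * √(r ^ 2 + q ^ 2) * √(1 + k ^ 2) := by
        rw [← hprod, Real.sqrt_mul (by positivity)]
        ring

theorem stmt_5 (p q r k : ℝ) (hpq : p < q) (hr : r ≠ 0)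
    (hk : (p * k + r ≥ 0 ∧ -(q * k) - r ≥ 0) ∨ (p * k + r ≤ 0 ∧ -(q * k) - r ≤ 0)) :
    (q - p) * Real.sqrt (r ^ 2 + p ^ 2) * Real.sqrt (r ^ 2 + q ^ 2) *
        Real.sqrt (1 + k ^ 2) ≥
      (r ^ 2 + p ^ 2) * |-(q * k) - r| + (r ^ 2 + q ^ 2) * |p * k + r| :=
  stmt_5_general p q r k hpq hk
end

section
/- Let p < q and r ≠ 0. If pk + r ≥ 0 and -qk - r ≥ 0, then equality (q-p)·√(r²+p²)·√(r²+q²)·√(1+k²) = (r²+p²)·(−qk−r) + (r²+q²)·(pk+r) holds if and only if r(p+q)·k = pq − r² (in particular, if p+q ≠ 0, iff k = (pq−r²)/(r(p+q))). -/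
/-!
Put `A = k (pq - r²) + r (p + q)` and `C = r (p + q) k - (pq - r²)`. The right-hand side equals
`(q - p) A`, so `A ≥ 0`, while the two-square identity
`(r² + p²)(r² + q²)(1 + k²) = A² + C²` (`A + iC = (p + ir)(q + ir)(k - i)`) turns the
left-hand side into `(q - p) √(A² + C²)`. Hence equality holds iff `√(A² + C²) = A`, i.e. `C = 0`.
-/

lemma Real.sqrt_sq_add_sq_eq_self_iff {a c : ℝ} (ha : 0 ≤ a) : √(a ^ 2 + c ^ 2) = a ↔ c = 0 := by
  rw [Real.sqrt_eq_iff_mul_self_eq (by positivity) ha]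
  constructor
  · intro h
    exact pow_eq_zero_iff two_ne_zero |>.mp (by linarith)
  · rintro rfl
    ring

lemma sqrt_mul_sqrt_mul_sqrt_eq_sqrt_sq_add_sq (p q r k : ℝ) :
    √(r ^ 2 + p ^ 2) * √(r ^ 2 + q ^ 2) * √(1 + k ^ 2) =
      √((k * (p * q - r ^ 2) + r * (p + q)) ^ 2 + (r * (p + q) * k - (p * q - r ^ 2)) ^ 2) := by
  rw [← Real.sqrt_mul (by positivity), ← Real.sqrt_mul (by positivity)]
  ring_nf

theorem stmt_6_general (p q r k : ℝ) (hpq : p < q)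
    (h1 : p * k + r ≥ 0) (h2 : -(q * k) - r ≥ 0) :
    ((q - p) * Real.sqrt (r ^ 2 + p ^ 2) * Real.sqrt (r ^ 2 + q ^ 2) *
        Real.sqrt (1 + k ^ 2) =
      (r ^ 2 + p ^ 2) * (-(q * k) - r) + (r ^ 2 + q ^ 2) * (p * k + r)) ↔
    r * (p + q) * k = p * q - r ^ 2 := by
  have hqp : 0 < q - p := sub_pos.mpr hpq
  set A := k * (p * q - r ^ 2) + r * (p + q)
  have hRHS : (r ^ 2 + p ^ 2) * (-(q * k) - r) + (r ^ 2 + q ^ 2) * (p * k + r) = (q - p) * A := by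
    ring
  have hA : 0 ≤ A := nonneg_of_mul_nonneg_right (hRHS ▸ by positivity) hqp
  rw [mul_assoc, mul_assoc, ← mul_assoc (√_), sqrt_mul_sqrt_mul_sqrt_eq_sqrt_sq_add_sq, hRHS,
    mul_right_inj' hqp.ne', Real.sqrt_sq_add_sq_eq_self_iff hA, sub_eq_zero]

theorem stmt_6 (p q r k : ℝ) (hpq : p < q) (hr : r ≠ 0)
    (h1 : p * k + r ≥ 0) (h2 : -(q * k) - r ≥ 0) :
    ((q - p) * Real.sqrt (r ^ 2 + p ^ 2) * Real.sqrt (r ^ 2 + q ^ 2) *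
        Real.sqrt (1 + k ^ 2) =
      (r ^ 2 + p ^ 2) * (-(q * k) - r) + (r ^ 2 + q ^ 2) * (p * k + r)) ↔
    r * (p + q) * k = p * q - r ^ 2 :=
  stmt_6_general p q r k hpq h1 h2
end

section
/- Let p < q with pq ≠ 0 and r ≠ 0 satisfy r² + pq = 0 (angle BAC is right). Then for all real k with (pk+r)(−qk−r) ≤ 0 we have (q−p)·√(r²+p²)·√(r²+q²)·√(1+k²) ≥ (r²+p²)·|−qk−r| + (r²+q²)·|pk+r|, with equality if and only if k = 0. -/
/-!
Since `r² = -pq`, one has `(r² + p²)(r² + q²) = r²(q - p)²`, so the left side is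
`(q - p)²|r|√(1 + k²)`. The hypothesis on `k` says that `pk + r` and `qk + r` have the same
sign, so the weighted sum of absolute values on the right is the absolute value of
`(r² + p²)(qk + r) + (r² + q²)(pk + r) = (r² + pq)(p + q)k + r(2r² + p² + q²) = r(q - p)²`.
The claim thus reduces to `1 ≤ √(1 + k²)`, with equality exactly at `k = 0`.
-/

open Real

lemma abs_add_of_mul_nonneg {R : Type*} [Ring R] [LinearOrder R] [IsStrictOrderedRing R]
    {a b : R} (h : 0 ≤ a * b) : |a + b| = |a| + |b| :=
  (abs_add_eq_add_abs_iff a b).2 (mul_nonneg_iff.1 h)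

lemma le_mul_sqrt_one_add_sq {a : ℝ} (ha : 0 ≤ a) (k : ℝ) : a ≤ a * √(1 + k ^ 2) :=
  le_mul_of_one_le_right ha (one_le_sqrt.2 (le_add_of_nonneg_right (sq_nonneg k)))

lemma mul_sqrt_one_add_sq_eq_self_iff {a : ℝ} (ha : a ≠ 0) (k : ℝ) :
    a * √(1 + k ^ 2) = a ↔ k = 0 := by
  simp [mul_eq_left₀ ha]

section RightAngle

variable {p q r : ℝ}

lemma sqrt_mul_sqrt_of_right_angle (hpq : p < q) (hright : r ^ 2 + p * q = 0) :
    √(r ^ 2 + p ^ 2) * √(r ^ 2 + q ^ 2) = (q - p) * |r| := by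
  rw [← sqrt_mul (by positivity), ← abs_of_pos (sub_pos.2 hpq), ← abs_mul,
    ← sqrt_sq_eq_abs]
  congr 1
  linear_combination (r ^ 2 + p * q) * hright

lemma weighted_abs_add_of_right_angle (hright : r ^ 2 + p * q = 0) {k : ℝ}
    (hk : (p * k + r) * (-(q * k) - r) ≤ 0) :
    (r ^ 2 + p ^ 2) * |-(q * k) - r| + (r ^ 2 + q ^ 2) * |p * k + r| = (q - p) ^ 2 * |r| := by
  have hc : 0 ≤ r ^ 2 + p ^ 2 := by positivity
  have hd : 0 ≤ r ^ 2 + q ^ 2 := by positivity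
  have hsame : 0 ≤ ((r ^ 2 + p ^ 2) * (q * k + r)) * ((r ^ 2 + q ^ 2) * (p * k + r)) := by
    have hk' : 0 ≤ (q * k + r) * (p * k + r) := by linarith
    calc 0 ≤ ((r ^ 2 + p ^ 2) * (r ^ 2 + q ^ 2)) * ((q * k + r) * (p * k + r)) :=
          mul_nonneg (mul_nonneg hc hd) hk'
      _ = _ := by ring
  calc (r ^ 2 + p ^ 2) * |-(q * k) - r| + (r ^ 2 + q ^ 2) * |p * k + r|
      = |(r ^ 2 + p ^ 2) * (q * k + r)| + |(r ^ 2 + q ^ 2) * (p * k + r)| := by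
        rw [abs_mul, abs_mul, abs_of_nonneg hc, abs_of_nonneg hd, ← neg_add', abs_neg]
    _ = |(r ^ 2 + p ^ 2) * (q * k + r) + (r ^ 2 + q ^ 2) * (p * k + r)| :=
        (abs_add_of_mul_nonneg hsame).symm
    _ = |r * (q - p) ^ 2| := by
        congr 1
        linear_combination (k * (p + q) + 2 * r) * hright
    _ = (q - p) ^ 2 * |r| := by rw [abs_mul, abs_of_nonneg (sq_nonneg (q - p)), mul_comm]

end RightAngle

theorem stmt_10_general (p q r : ℝ) (hpq : p < q) (hr : r ≠ 0)
    (hright : r ^ 2 + p * q = 0) (k : ℝ)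
    (hk : (p * k + r) * (-(q * k) - r) ≤ 0) :
    ((q - p) * Real.sqrt (r ^ 2 + p ^ 2) * Real.sqrt (r ^ 2 + q ^ 2) *
        Real.sqrt (1 + k ^ 2) ≥
      (r ^ 2 + p ^ 2) * |-(q * k) - r| + (r ^ 2 + q ^ 2) * |p * k + r|) ∧
    ((q - p) * Real.sqrt (r ^ 2 + p ^ 2) * Real.sqrt (r ^ 2 + q ^ 2) *
        Real.sqrt (1 + k ^ 2) =
      (r ^ 2 + p ^ 2) * |-(q * k) - r| + (r ^ 2 + q ^ 2) * |p * k + r| ↔ k = 0) := by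
  have hlhs : (q - p) * √(r ^ 2 + p ^ 2) * √(r ^ 2 + q ^ 2) * √(1 + k ^ 2) =
      (q - p) ^ 2 * |r| * √(1 + k ^ 2) := by
    rw [mul_assoc (q - p), sqrt_mul_sqrt_of_right_angle hpq hright]
    ring
  have hpos : 0 < (q - p) ^ 2 * |r| := by
    have := sub_pos.2 hpq
    positivity
  rw [hlhs, weighted_abs_add_of_right_angle hright hk]
  exact ⟨le_mul_sqrt_one_add_sq hpos.le k, mul_sqrt_one_add_sq_eq_self_iff hpos.ne' k⟩

theorem stmt_10 (p q r : ℝ) (hpq : p < q) (hpq0 : p * q ≠ 0) (hr : r ≠ 0)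
    (hright : r ^ 2 + p * q = 0) (k : ℝ)
    (hk : (p * k + r) * (-(q * k) - r) ≤ 0) :
    ((q - p) * Real.sqrt (r ^ 2 + p ^ 2) * Real.sqrt (r ^ 2 + q ^ 2) *
        Real.sqrt (1 + k ^ 2) ≥
      (r ^ 2 + p ^ 2) * |-(q * k) - r| + (r ^ 2 + q ^ 2) * |p * k + r|) ∧
    ((q - p) * Real.sqrt (r ^ 2 + p ^ 2) * Real.sqrt (r ^ 2 + q ^ 2) *
        Real.sqrt (1 + k ^ 2) =
      (r ^ 2 + p ^ 2) * |-(q * k) - r| + (r ^ 2 + q ^ 2) * |p * k + r| ↔ k = 0) :=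
  stmt_10_general p q r hpq hr hright k hk
end

section
/- Let triangle ABC have an obtuse or right angle at A. Then for every point M in the region bounded by lines AB and AC lying outside the double angle at A (i.e., in the supplementary corner regions), the strict inequality a·R_A > c·r_b + b·r_c holds when the angle at A is obtuse. -/
/-!
After factoring out `|x|`, with `s = pk + r`, `t = qk + r`, `c² = r² + p²`, `b² = r² + q²`, the
claim reads `c²|t| + b²|s| < (q - p) c b √(1 + k²)`. On the supplementary regions `s` and `t` have
the same sign, so the left side is `|c²t + b²s|`, and comparing squares reduces everything to the
polynomial identity
`(q - p)² c² b² (1 + k²) - (c²t + b²s)² = ((rk - q)c² + (rk - p)b²)² - 4(r² + pq) c² b² (1 + k²)`,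
whose right side is positive because the angle at `A` is obtuse.
-/

lemma mul_abs_add_mul_abs_of_mul_pos {α : Type*} [Ring α] [LinearOrder α] [IsStrictOrderedRing α]
    {a b s t : α} (ha : 0 ≤ a) (hb : 0 ≤ b) (hst : 0 < s * t) :
    a * |s| + b * |t| = |a * s + b * t| := by
  rw [(abs_add_eq_add_abs_iff _ _).mpr, abs_mul, abs_mul, abs_of_nonneg ha, abs_of_nonneg hb]
  rcases mul_pos_iff.mp hst with ⟨hs, ht⟩ | ⟨hs, ht⟩
  · exact Or.inl ⟨mul_nonneg ha hs.le, mul_nonneg hb ht.le⟩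
  · exact Or.inr ⟨mul_nonpos_of_nonneg_of_nonpos ha hs.le, mul_nonpos_of_nonneg_of_nonpos hb ht.le⟩

lemma sq_add_sq_pos_of_sq_add_mul_neg {r p q : ℝ} (h : r ^ 2 + p * q < 0) : 0 < r ^ 2 + p ^ 2 := by
  have hp : p ≠ 0 := by
    rintro rfl
    nlinarith [sq_nonneg r]
  positivity

lemma sq_weighted_sum_lt_of_obtuse {p q r : ℝ} (hobtuse : r ^ 2 + p * q < 0) (k : ℝ) :
    ((r ^ 2 + p ^ 2) * (q * k + r) + (r ^ 2 + q ^ 2) * (p * k + r)) ^ 2 <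
      (q - p) ^ 2 * (r ^ 2 + p ^ 2) * (r ^ 2 + q ^ 2) * (1 + k ^ 2) := by
  have hc := sq_add_sq_pos_of_sq_add_mul_neg hobtuse
  have hb := sq_add_sq_pos_of_sq_add_mul_neg (r := r) (p := q) (q := p) (by linarith [mul_comm p q])
  have key : (q - p) ^ 2 * (r ^ 2 + p ^ 2) * (r ^ 2 + q ^ 2) * (1 + k ^ 2) -
      ((r ^ 2 + p ^ 2) * (q * k + r) + (r ^ 2 + q ^ 2) * (p * k + r)) ^ 2 =
      ((r * k - q) * (r ^ 2 + p ^ 2) + (r * k - p) * (r ^ 2 + q ^ 2)) ^ 2 +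
        4 * -(r ^ 2 + p * q) * (r ^ 2 + p ^ 2) * (r ^ 2 + q ^ 2) * (1 + k ^ 2) := by
    ring
  have hneg : 0 < -(r ^ 2 + p * q) := neg_pos.mpr hobtuse
  have : 0 < ((r * k - q) * (r ^ 2 + p ^ 2) + (r * k - p) * (r ^ 2 + q ^ 2)) ^ 2 +
      4 * -(r ^ 2 + p * q) * (r ^ 2 + p ^ 2) * (r ^ 2 + q ^ 2) * (1 + k ^ 2) := by
    positivity
  linarith

lemma weighted_abs_sum_lt_of_obtuse {p q r k : ℝ} (hpq : p < q) (hobtuse : r ^ 2 + p * q < 0)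
    (hk : 0 < (q * k + r) * (p * k + r)) :
    (r ^ 2 + p ^ 2) * |q * k + r| + (r ^ 2 + q ^ 2) * |p * k + r| <
      (q - p) * √(r ^ 2 + p ^ 2) * √(r ^ 2 + q ^ 2) * √(1 + k ^ 2) := by
  have hRHS : (q - p) * √(r ^ 2 + p ^ 2) * √(r ^ 2 + q ^ 2) * √(1 + k ^ 2) =
      √((q - p) ^ 2 * (r ^ 2 + p ^ 2) * (r ^ 2 + q ^ 2) * (1 + k ^ 2)) := by
    rw [Real.sqrt_mul' _ (by positivity), Real.sqrt_mul' _ (by positivity),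
      Real.sqrt_mul' _ (by positivity), Real.sqrt_sq (sub_nonneg.mpr hpq.le)]
  rw [mul_abs_add_mul_abs_of_mul_pos (by positivity) (by positivity) hk, hRHS]
  exact (Real.lt_sqrt (abs_nonneg _)).mpr
    ((sq_abs _).trans_lt (sq_weighted_sum_lt_of_obtuse hobtuse k))

theorem stmt_17_general (p q r : ℝ) (hpq : p < q)
    (hobtuse : r ^ 2 + p * q < 0) (k x : ℝ) (hx : x ≠ 0)
    (hk : (p * k + r) * (-(q * k) - r) < 0) :
    (q - p) * Real.sqrt (r ^ 2 + p ^ 2) * Real.sqrt (r ^ 2 + q ^ 2) *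
        Real.sqrt (x ^ 2 + (k * x + r - r) ^ 2) >
      (r ^ 2 + p ^ 2) * |-(q * (k * x + r)) - r * x + q * r| +
      (r ^ 2 + q ^ 2) * |p * (k * x + r) + r * x - p * r| := by
  have hsame : 0 < (q * k + r) * (p * k + r) := by linear_combination hk
  rw [show -(q * (k * x + r)) - r * x + q * r = x * -(q * k + r) by ring,
    show p * (k * x + r) + r * x - p * r = x * (p * k + r) by ring,
    show x ^ 2 + (k * x + r - r) ^ 2 = x ^ 2 * (1 + k ^ 2) by ring,
    Real.sqrt_mul (sq_nonneg x), Real.sqrt_sq_eq_abs, abs_mul, abs_mul, abs_neg]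
  calc (r ^ 2 + p ^ 2) * (|x| * |q * k + r|) + (r ^ 2 + q ^ 2) * (|x| * |p * k + r|)
      = |x| * ((r ^ 2 + p ^ 2) * |q * k + r| + (r ^ 2 + q ^ 2) * |p * k + r|) := by ring
    _ < |x| * ((q - p) * √(r ^ 2 + p ^ 2) * √(r ^ 2 + q ^ 2) * √(1 + k ^ 2)) :=
      mul_lt_mul_of_pos_left (weighted_abs_sum_lt_of_obtuse hpq hobtuse hsame) (abs_pos.mpr hx)
    _ = (q - p) * √(r ^ 2 + p ^ 2) * √(r ^ 2 + q ^ 2) * (|x| * √(1 + k ^ 2)) := by ring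

theorem stmt_17 (p q r : ℝ) (hpq : p < q) (hr : r ≠ 0)
    (hobtuse : r ^ 2 + p * q < 0) (k x : ℝ) (hx : x ≠ 0)
    (hk : (p * k + r) * (-(q * k) - r) < 0) :
    (q - p) * Real.sqrt (r ^ 2 + p ^ 2) * Real.sqrt (r ^ 2 + q ^ 2) *
        Real.sqrt (x ^ 2 + (k * x + r - r) ^ 2) >
      (r ^ 2 + p ^ 2) * |-(q * (k * x + r)) - r * x + q * r| +
      (r ^ 2 + q ^ 2) * |p * (k * x + r) + r * x - p * r| :=
  stmt_17_general p q r hpq hobtuse k x hx hk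
end

section
/- For a triangle with vertices A(0,r), B(p,0), C(q,0), p < q, r ≠ 0, and a point M(x,y) in the closed triangle, the inequality |q−p|·√(r²+p²)·√(r²+q²)·√(x²+(y−r)²) ≥ (r²+p²)·|−qy−rx+qr| + (r²+q²)·|py+rx−pr| holds. -/
/-!
Write `M = A + s (B - A) + t (C - A)` with `s, t ≥ 0`. The two quantities inside the absolute
values are `(q - p) r s` and `(q - p) r t`, so after cancelling `|q - p|` the claim becomes
`|r| (|AB|² s + |AC|² t) ≤ |AB| |AC| |AM|`. Squared, this is a Lagrange-type identity:
`|AB|² |AC|² |AM|² - r² (|AB|² s + |AC|² t)² = (q |AB|² s + p |AC|² t)²`.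
-/

theorem exists_eq_add_smul_sub_add_smul_sub_of_mem_convexHull_triple {E : Type*}
    [AddCommGroup E] [Module ℝ E] {a b c z : E} (hz : z ∈ convexHull ℝ {a, b, c}) :
    ∃ s t : ℝ, 0 ≤ s ∧ 0 ≤ t ∧ z = a + s • (b - a) + t • (c - a) := by
  rw [convexHull_insert (Set.insert_nonempty b {c}), convexHull_pair,
    convexJoin_singleton_left] at hz
  obtain ⟨w, ⟨α, β, hα, hβ, hαβ, rfl⟩, γ, δ, hγ, hδ, hγδ, rfl⟩ :=
    Set.mem_iUnion₂.mp hz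
  refine ⟨δ * α, δ * β, by positivity, by positivity, ?_⟩
  rw [eq_sub_of_add_eq hγδ, eq_sub_of_add_eq hαβ]
  module

theorem abs_mul_le_sqrt_mul_sqrt_mul_sqrt (p q r s t : ℝ) :
    |r * ((r ^ 2 + p ^ 2) * s + (r ^ 2 + q ^ 2) * t)| ≤
      √(r ^ 2 + p ^ 2) * √(r ^ 2 + q ^ 2) * √((s * p + t * q) ^ 2 + ((s + t) * r) ^ 2) := by
  have lagrange :
      (r ^ 2 + p ^ 2) * (r ^ 2 + q ^ 2) * ((s * p + t * q) ^ 2 + ((s + t) * r) ^ 2) =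
        (r * ((r ^ 2 + p ^ 2) * s + (r ^ 2 + q ^ 2) * t)) ^ 2 +
          (q * (r ^ 2 + p ^ 2) * s + p * (r ^ 2 + q ^ 2) * t) ^ 2 := by
    ring
  rw [← Real.sqrt_mul (by positivity), ← Real.sqrt_mul (by positivity), lagrange]
  exact Real.abs_le_sqrt (le_add_of_nonneg_right (sq_nonneg _))

theorem stmt_18_general (p q r x y : ℝ)
    (hM : (x, y) ∈ convexHull ℝ ({(0, r), (p, 0), (q, 0)} : Set (ℝ × ℝ))) :
    |q - p| * Real.sqrt (r ^ 2 + p ^ 2) * Real.sqrt (r ^ 2 + q ^ 2) *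
        Real.sqrt (x ^ 2 + (y - r) ^ 2) ≥
      (r ^ 2 + p ^ 2) * |-(q * y) - r * x + q * r| +
      (r ^ 2 + q ^ 2) * |p * y + r * x - p * r| := by
  obtain ⟨s, t, hs, ht, hxy⟩ := exists_eq_add_smul_sub_add_smul_sub_of_mem_convexHull_triple hM
  obtain ⟨rfl, rfl⟩ : x = s * p + t * q ∧ y = r - (s + t) * r := by
    simp only [Prod.ext_iff, Prod.fst_add, Prod.snd_add, Prod.smul_fst, Prod.smul_snd,
      Prod.fst_sub, Prod.snd_sub, smul_eq_mul] at hxy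
    constructor <;> linarith [hxy.1, hxy.2]
  have hAM : (s * p + t * q) ^ 2 + (r - (s + t) * r - r) ^ 2 =
      (s * p + t * q) ^ 2 + ((s + t) * r) ^ 2 := by ring
  have hs' : -(q * (r - (s + t) * r)) - r * (s * p + t * q) + q * r = (q - p) * r * s := by ring
  have ht' : p * (r - (s + t) * r) + r * (s * p + t * q) - p * r = (q - p) * r * t := by ring
  rw [hAM, hs', ht', ge_iff_le]
  calc (r ^ 2 + p ^ 2) * |(q - p) * r * s| + (r ^ 2 + q ^ 2) * |(q - p) * r * t|
      = |q - p| * |r * ((r ^ 2 + p ^ 2) * s + (r ^ 2 + q ^ 2) * t)| := by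
        rw [abs_mul r,
          abs_of_nonneg (by positivity : 0 ≤ (r ^ 2 + p ^ 2) * s + (r ^ 2 + q ^ 2) * t)]
        simp only [abs_mul, abs_of_nonneg hs, abs_of_nonneg ht]
        ring
    _ ≤ |q - p| * (√(r ^ 2 + p ^ 2) * √(r ^ 2 + q ^ 2) *
          √((s * p + t * q) ^ 2 + ((s + t) * r) ^ 2)) :=
        mul_le_mul_of_nonneg_left (abs_mul_le_sqrt_mul_sqrt_mul_sqrt p q r s t) (abs_nonneg _)
    _ = _ := by ring

theorem stmt_18 (p q r x y : ℝ) (hpq : p < q) (hr : r ≠ 0)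
    (hM : (x, y) ∈ convexHull ℝ ({(0, r), (p, 0), (q, 0)} : Set (ℝ × ℝ))) :
    |q - p| * Real.sqrt (r ^ 2 + p ^ 2) * Real.sqrt (r ^ 2 + q ^ 2) *
        Real.sqrt (x ^ 2 + (y - r) ^ 2) ≥
      (r ^ 2 + p ^ 2) * |-(q * y) - r * x + q * r| +
      (r ^ 2 + q ^ 2) * |p * y + r * x - p * r| :=
  stmt_18_general p q r x y hM
end
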